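/- arXiv:1501.01707 — 7 statements merged into one kernel-verified Lean document; each statement's English description precedes it below -/
import Mathlib

section
/- Let G be a connected bipartite simple graph, let C be a convex set of vertices of G, and let uv be an edge of G with u ∈ C and v ∉ C. Then for every vertex u' ∈ C, the distance d_G(u',u) is strictly less than d_G(u',v). -/
/-- In a 2-colored graph, the endpoints of a walk have equal colors iff the walk
has even length. -/
lemma walk_color_parity {V : Type*} {G : SimpleGraph V} (c : G.Coloring (Fin 2))
    {x y : V} (p : G.Walk x y) : c x = c y ↔ Even p.length := by
  induction p with
  | nil => simp
  | @cons a b z h q ih =>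
    have hne : c a ≠ c b := c.valid h
    simp only [SimpleGraph.Walk.length_cons, Nat.even_add_one, ← ih]
    have h1 := (c a).is_lt
    have h2 := (c b).is_lt
    have h3 := (c z).is_lt
    simp only [Fin.ext_iff] at *
    omega

/-- A set `C` of vertices of `G` is convex if it contains every vertex lying on a
shortest path between two of its vertices (expressed via distances). -/
def GraphConvex {V : Type*} (G : SimpleGraph V) (C : Set V) : Prop :=
  ∀ u ∈ C, ∀ w ∈ C, ∀ v : V, G.edist u v + G.edist v w = G.edist u w → v ∈ C

/-- Lemma 1: for a convex set `C` in a connected bipartite graph and an edge `uv`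
with `u ∈ C`, `v ∉ C`, every `u' ∈ C` is strictly closer to `u` than to `v`. -/
theorem stmt_0 {V : Type*} [Fintype V] (G : SimpleGraph V)
    (hconn : G.Connected) (hbip : G.Colorable 2)
    (C : Set V) (hC : GraphConvex G C)
    (u v : V) (huv : G.Adj u v) (hu : u ∈ C) (hv : v ∉ C)
    (u' : V) (hu' : u' ∈ C) :
    G.edist u' u < G.edist u' v := by
  obtain ⟨c⟩ := hbip
  obtain ⟨p, hp⟩ := (hconn u' u).exists_walk_length_eq_edist
  obtain ⟨q, hq⟩ := (hconn u' v).exists_walk_length_eq_edist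
  rw [← hp, ← hq, Nat.cast_lt]
  have hvu : G.edist v u = 1 := SimpleGraph.edist_eq_one_iff_adj.mpr huv.symm
  -- parities differ
  have hpar : p.length ≠ q.length := by
    intro h
    have h1 := walk_color_parity c p
    have h2 := walk_color_parity c q
    have hne : c u ≠ c v := c.valid huv
    rw [h] at h1
    have h3 : (c u' = c u) ↔ (c u' = c v) := h1.trans h2.symm
    clear h1 h2
    have h4 := (c u).is_lt
    have h5 := (c v).is_lt
    have h6 := (c u').is_lt
    simp only [Fin.ext_iff] at *
    omega
  -- p.length ≤ q.length + 1 by triangle inequality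
  have htri : G.edist u' u ≤ G.edist u' v + G.edist v u := G.edist_triangle
  rw [← hp, ← hq, hvu] at htri
  have hle : p.length ≤ q.length + 1 := by exact_mod_cast htri
  rcases lt_or_ge p.length q.length with h | h
  · exact h
  · exfalso
    have heq : p.length = q.length + 1 := by omega
    have : G.edist u' v + G.edist v u = G.edist u' u := by
      rw [← hp, ← hq, hvu, heq]; push_cast; ring
    exact hv (hC u' hu' u hu v this)
end

section
/- Let G be a connected bipartite simple graph whose vertex set is partitioned into two convex sets X₁ and X₂, and let uv be an edge of G with u ∈ X₁ and v ∈ X₂. Then X₁ = X_{uv} and X₂ = X_{vu}, where X_{uv} is the set of vertices strictly closer to u than to v and X_{vu} is the set of vertices strictly closer to v than to u. -/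
/-!
In a bipartite graph no vertex `x` is equidistant from the ends of an edge `uv`: geodesics
`x → u` and `x → v` of equal length, closed up by `uv`, would give an odd closed walk.
If moreover `x` and `u` lie in a convex set `C` not containing `v`, then `x` cannot be
strictly closer to `v`, since then `v` would lie on a geodesic from `x` to `u`. Hence every
vertex of `X₁` is strictly closer to `u` and every vertex of `X₂` strictly closer to `v`, and
since `X₁, X₂` cover `V` while `X_{uv}, X_{vu}` are disjoint, the inclusions are equalities.
-/

section

open SimpleGraph

variable {V : Type*} {G : SimpleGraph V} {x u v : V}

theorem SimpleGraph.edist_ne_edist_of_adj (hbip : G.Colorable 2) (hxu : G.Reachable x u)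
    (huv : G.Adj u v) : G.edist x u ≠ G.edist x v := by
  intro h
  obtain ⟨p, hp⟩ := hxu.exists_walk_length_eq_edist
  obtain ⟨q, hq⟩ := (hxu.trans huv.reachable).exists_walk_length_eq_edist
  have hpq : p.length = q.length := by exact_mod_cast hp.trans (h.trans hq.symm)
  have hodd := two_colorable_iff_forall_loop_even.mp hbip x (p.append (.cons huv q.reverse))
  rw [Walk.length_append, Walk.length_cons, Walk.length_reverse, hpq] at hodd
  exact Nat.not_even_iff_odd.mpr ⟨q.length, by ring⟩ hodd

theorem GraphConvex.edist_le_of_adj_of_notMem {C : Set V} (hC : GraphConvex G C) (hx : x ∈ C)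
    (hu : u ∈ C) (hv : v ∉ C) (huv : G.Adj u v) : G.edist x u ≤ G.edist x v := by
  by_contra! hlt
  have hvu : G.edist v u = 1 := edist_eq_one_iff_adj.mpr huv.symm
  have hgeod : G.edist x v + G.edist v u = G.edist x u := by
    refine le_antisymm ?_ G.edist_triangle
    rw [hvu]
    exact Order.add_one_le_of_lt hlt
  exact hv (hC x hx u hu v hgeod)

end

theorem stmt_3_general {V : Type*} (G : SimpleGraph V)
    (hconn : G.Connected) (hbip : G.Colorable 2)
    (X₁ X₂ : Set V) (hX₁ : GraphConvex G X₁) (hX₂ : GraphConvex G X₂)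
    (hdisj : Disjoint X₁ X₂) (hcover : X₁ ∪ X₂ = (Set.univ : Set V))
    (u v : V) (huv : G.Adj u v) (hu : u ∈ X₁) (hv : v ∈ X₂) :
    X₁ = {x : V | G.edist x u < G.edist x v} ∧
    X₂ = {x : V | G.edist x v < G.edist x u} := by
  have h₁ : ∀ x ∈ X₁, G.edist x u < G.edist x v := fun x hx =>
    (hX₁.edist_le_of_adj_of_notMem hx hu (hdisj.notMem_of_mem_right hv) huv).lt_of_ne
      (SimpleGraph.edist_ne_edist_of_adj hbip (hconn x u) huv)
  have h₂ : ∀ x ∈ X₂, G.edist x v < G.edist x u := fun x hx =>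
    (hX₂.edist_le_of_adj_of_notMem hx hv (hdisj.notMem_of_mem_left hu) huv.symm).lt_of_ne
      (SimpleGraph.edist_ne_edist_of_adj hbip (hconn x v) huv.symm)
  have hmem : ∀ x, x ∈ X₁ ∨ x ∈ X₂ := fun x => hcover.ge (Set.mem_univ x)
  refine ⟨Set.Subset.antisymm h₁ fun x hx => ?_, Set.Subset.antisymm h₂ fun x hx => ?_⟩
  · exact (hmem x).resolve_right fun hx₂ => lt_asymm hx (h₂ x hx₂)
  · exact (hmem x).resolve_left fun hx₁ => lt_asymm hx (h₁ x hx₁)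

/-- Corollary 3: if the vertex set of a connected bipartite graph is partitioned
into two convex sets `X₁`, `X₂` and `uv` is an edge with `u ∈ X₁`, `v ∈ X₂`, then
`X₁ = X_{uv}` and `X₂ = X_{vu}`. -/
theorem stmt_3 {V : Type*} [Fintype V] (G : SimpleGraph V)
    (hconn : G.Connected) (hbip : G.Colorable 2)
    (X₁ X₂ : Set V) (hX₁ : GraphConvex G X₁) (hX₂ : GraphConvex G X₂)
    (hdisj : Disjoint X₁ X₂) (hcover : X₁ ∪ X₂ = (Set.univ : Set V))
    (u v : V) (huv : G.Adj u v) (hu : u ∈ X₁) (hv : v ∈ X₂) :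
    X₁ = {x : V | G.edist x u < G.edist x v} ∧
    X₂ = {x : V | G.edist x v < G.edist x u} :=
  stmt_3_general G hconn hbip X₁ X₂ hX₁ hX₂ hdisj hcover u v huv hu hv
end

section
/- A connected bipartite simple graph G with edge set E has at most |E| convex 2-partitions; that is, the number of unordered partitions of the vertex set of G into two nonempty convex sets is at most the number of edges of G. -/
namespace SimpleGraph

variable {V : Type*} {G : SimpleGraph V} {x u v : V}

def halfspace (G : SimpleGraph V) (u v : V) : Set V :=
  {x | G.dist x u < G.dist x v}

lemma dist_ne_dist_of_adj (hbip : G.Colorable 2) (hxu : G.Reachable x u) (huv : G.Adj u v) :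
    G.dist x u ≠ G.dist x v := by
  obtain ⟨p, hp⟩ := hxu.exists_walk_length_eq_dist
  obtain ⟨q, hq⟩ := (hxu.trans huv.reachable).exists_walk_length_eq_dist
  have heven := two_colorable_iff_forall_loop_even.mp hbip x ((p.concat huv).append q.reverse)
  rw [Walk.length_append, Walk.length_concat, Walk.length_reverse, hp, hq, Nat.even_iff] at heven
  omega

end SimpleGraph

namespace GraphConvex

open SimpleGraph

variable {V : Type*} {G : SimpleGraph V} {x u v : V}

lemma dist_lt_dist_of_adj {C : Set V} (hC : GraphConvex G C) (hbip : G.Colorable 2)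
    (hxu : G.Reachable x u) (hx : x ∈ C) (hu : u ∈ C) (hv : v ∉ C) (huv : G.Adj u v) :
    G.dist x u < G.dist x v := by
  have hne := dist_ne_dist_of_adj hbip hxu huv
  by_contra! hle
  have hstep : G.dist x v + 1 = G.dist x u := by
    rcases huv.diff_dist_adj (u := x) with h | h | h <;> omega
  refine hv (hC x hx u hu v ?_)
  rw [← (hxu.trans huv.reachable).coe_dist_eq_edist, ← huv.symm.reachable.coe_dist_eq_edist,
    ← hxu.coe_dist_eq_edist, dist_eq_one_iff_adj.mpr huv.symm]
  exact_mod_cast hstep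

lemma eq_halfspace {A B : Set V} (hA : GraphConvex G A) (hB : GraphConvex G B)
    (hAB : IsCompl A B) (hconn : G.Connected) (hbip : G.Colorable 2) (hu : u ∈ A) (hv : v ∈ B)
    (huv : G.Adj u v) : A = G.halfspace u v := by
  have hvA : v ∉ A := Set.disjoint_right.mp hAB.disjoint hv
  have huB : u ∉ B := Set.disjoint_left.mp hAB.disjoint hu
  ext x
  refine ⟨fun hx ↦ hA.dist_lt_dist_of_adj hbip (hconn x u) hx hu hvA huv,
    fun (hlt : G.dist x u < G.dist x v) ↦ by_contra fun hx ↦ ?_⟩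
  have := hB.dist_lt_dist_of_adj hbip (hconn x v) (hAB.compl_eq.subset hx) hv huB huv.symm
  omega

end GraphConvex

/-- A connected bipartite graph has at most `|E|` (unordered) convex 2-partitions. -/
theorem stmt_4 {V : Type*} [Fintype V] (G : SimpleGraph V)
    (hconn : G.Connected) (hbip : G.Colorable 2) :
    Nat.card {P : Set (Set V) // ∃ A B : Set V, A ≠ B ∧ P = {A, B} ∧
      A.Nonempty ∧ B.Nonempty ∧ Disjoint A B ∧ A ∪ B = (Set.univ : Set V) ∧
      GraphConvex G A ∧ GraphConvex G B} ≤ G.edgeSet.ncard := by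
  let halves : Sym2 V → Set (Set V) :=
    Sym2.lift ⟨fun u v ↦ {G.halfspace u v, G.halfspace v u}, fun _ _ ↦ Set.pair_comm _ _⟩
  have hsub : {P : Set (Set V) | ∃ A B : Set V, A ≠ B ∧ P = {A, B} ∧
      A.Nonempty ∧ B.Nonempty ∧ Disjoint A B ∧ A ∪ B = (Set.univ : Set V) ∧
      GraphConvex G A ∧ GraphConvex G B} ⊆ halves '' G.edgeSet := by
    rintro P ⟨A, B, -, rfl, ⟨a, ha⟩, ⟨b, hb⟩, hD, hU, hCA, hCB⟩
    have hAB : IsCompl A B := .of_eq hD.eq_bot hU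
    obtain ⟨p⟩ := hconn a b
    obtain ⟨⟨⟨u, v⟩, huv⟩, -, hu, hv⟩ := p.exists_boundary_dart A ha (Set.disjoint_right.mp hD hb)
    have hvB : v ∈ B := hAB.compl_eq.subset hv
    refine ⟨s(u, v), huv, ?_⟩
    rw [hCA.eq_halfspace hCB hAB hconn hbip hu hvB huv,
      hCB.eq_halfspace hCA hAB.symm hconn hbip hvB hu huv.symm]
    rfl
  calc _ ≤ (halves '' G.edgeSet).ncard := Set.ncard_le_ncard hsub
    _ ≤ G.edgeSet.ncard := Set.ncard_image_le
end

section
/- Let G be a connected bipartite simple graph, let 𝒳 = {X₁,…,X_p} be a convex p-partition of G, and let (F,φ) be an 𝒳-skeleton. Then for every i ∈ {1,…,p} and every u ∈ X_i, there is no edge vw ∈ F with φ(w) = i and d_G(u,v) < d_G(u,w). (In the notation of the paper: i ∈ L(u) for every u ∈ X_i, where L(u) = {1,…,p} − {φ(w) : u ∈ X_{vw} for some vw ∈ F}.) -/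
/-- `X : Fin p → Set V` is a convex `p`-partition of `G`: the parts are nonempty,
pairwise disjoint, cover all vertices, and each part is convex. -/
def IsConvexPartition {V : Type*} (G : SimpleGraph V) {p : ℕ} (X : Fin p → Set V) : Prop :=
  (∀ i, (X i).Nonempty) ∧ (∀ i j, i ≠ j → Disjoint (X i) (X j)) ∧
    (⋃ i, X i) = (Set.univ : Set V) ∧ (∀ i, GraphConvex G (X i))

/-- `V(F)`: the set of endvertices of the edges in `F`. -/
def endVerts {V : Type*} (F : Set (Sym2 V)) : Set V := {v | ∃ e ∈ F, v ∈ e}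

/-- `(F, φ)` is an `𝒳`-skeleton for the partition `X`: `F` is a set of edges of `G`,
each edge of `F` joins two distinct parts, whenever some edge of `G` joins two distinct
parts there is exactly one edge of `F` joining them, and on `V(F)` the function `φ`
records the index of the part containing each vertex. -/
def IsSkeleton {V : Type*} (G : SimpleGraph V) {p : ℕ} (X : Fin p → Set V)
    (F : Set (Sym2 V)) (φ : V → Fin p) : Prop :=
  F ⊆ G.edgeSet ∧
  (∀ u v : V, s(u, v) ∈ F → ∀ i, ¬(u ∈ X i ∧ v ∈ X i)) ∧
  (∀ i j : Fin p, i ≠ j → (∃ u v, G.Adj u v ∧ u ∈ X i ∧ v ∈ X j) →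
      ∃! e : Sym2 V, e ∈ F ∧ ∃ u v, e = s(u, v) ∧ u ∈ X i ∧ v ∈ X j) ∧
  (∀ v ∈ endVerts F, ∀ i, φ v = i ↔ v ∈ X i)

/-- The list `L(u) = [p] − {φ(w) : u ∈ X_{vw} for some vw ∈ F}`. -/
def Lset {V : Type*} (G : SimpleGraph V) {p : ℕ} (F : Set (Sym2 V)) (φ : V → Fin p)
    (u : V) : Set (Fin p) :=
  {i | ¬ ∃ v w : V, s(v, w) ∈ F ∧ φ w = i ∧ G.edist u v < G.edist u w}

/-- The list `L'(u) = L(u) − {φ(w) : w ∈ V(F) and φ(w) ∉ L(v) for some v ∈ I[u,w]}`. -/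
def L'set {V : Type*} (G : SimpleGraph V) {p : ℕ} (F : Set (Sym2 V)) (φ : V → Fin p)
    (u : V) : Set (Fin p) :=
  Lset G F φ u \
    {i | ∃ w ∈ endVerts F, φ w = i ∧
      ∃ v : V, G.edist u v + G.edist v w = G.edist u w ∧ i ∉ Lset G F φ v}

/-- If `(F, φ)` is a skeleton of a convex `p`-partition of a connected bipartite
graph, then for every `u ∈ X i` there is no edge `vw ∈ F` with `φ(w) = i` and
`d(u,v) < d(u,w)`; that is, `i ∈ L(u)`. -/
theorem stmt_8 {V : Type*} [Fintype V] (G : SimpleGraph V)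
    (hconn : G.Connected) (hbip : G.Colorable 2)
    (p : ℕ) (X : Fin p → Set V) (hX : IsConvexPartition G X)
    (F : Set (Sym2 V)) (φ : V → Fin p) (hskel : IsSkeleton G X F φ) :
    ∀ i : Fin p, ∀ u ∈ X i,
      ¬ ∃ v w : V, s(v, w) ∈ F ∧ φ w = i ∧ G.edist u v < G.edist u w := by
  rintro i u hu ⟨v, w, hvwF, hφw, hlt⟩
  obtain ⟨hFsub, hnotsame, _, hφ⟩ := hskel
  have hadj : G.Adj v w := hFsub hvwF
  have hwV : w ∈ endVerts F := ⟨s(v, w), hvwF, by simp⟩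
  have hwX : w ∈ X i := (hφ w hwV i).mp hφw
  have h1 : G.edist v w = 1 := SimpleGraph.edist_eq_one_iff_adj.mpr hadj
  have htri : G.edist u w ≤ G.edist u v + G.edist v w := G.edist_triangle
  have hge : G.edist u v + 1 ≤ G.edist u w :=
    Order.add_one_le_of_lt hlt
  have heq : G.edist u v + G.edist v w = G.edist u w := by
    rw [h1]
    exact le_antisymm hge (h1 ▸ htri)
  have hvX : v ∈ X i := hX.2.2.2 i u hu w hwX v heq
  exact hnotsame v w hvwF i ⟨hvX, hwX⟩
end

section
/- Let G be a connected bipartite simple graph, let 𝒳 = {X₁,…,X_p} be a convex p-partition of G, and let (F,φ) be an 𝒳-skeleton. Then for every j ∈ {1,…,p} and every edge v'w' of G with w' ∈ X_j and v' ∉ X_j, we have j ∉ L(v'); that is, there exists an edge vw ∈ F with φ(w) = j and d_G(v',v) < d_G(v',w). -/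
private lemma fin2_iff (x y z : Fin 2) (h : z = x ↔ z = y) : x = y := by
  revert x y z; decide

private lemma fin2_step (a b c : Fin 2) (h : a ≠ b) : a = c ↔ ¬ (b = c) := by
  revert a b c; decide

private lemma walk_parity {V : Type*} {G : SimpleGraph V} (C : G.Coloring (Fin 2)) :
    ∀ {u v : V} (p : G.Walk u v), p.length % 2 = 0 ↔ C u = C v := by
  intro u v p
  induction p with
  | nil => simp
  | @cons u w v h q ih =>
    have hne : C u ≠ C w := C.valid h
    simp only [SimpleGraph.Walk.length_cons]
    rw [fin2_step _ _ _ hne, ← ih]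
    omega

private lemma coe_dist {V : Type*} {G : SimpleGraph V} {u v : V} (h : G.Reachable u v) :
    (G.dist u v : ℕ∞) = G.edist u v :=
  ENat.coe_toNat (SimpleGraph.edist_ne_top_iff_reachable.mpr h)


/-- If `(F, φ)` is a skeleton of a convex `p`-partition of a connected bipartite
graph, then for every edge `v'w'` of `G` with `w' ∈ X j` and `v' ∉ X j` we have
`j ∉ L(v')`: there is an edge `vw ∈ F` with `φ(w) = j` and `d(v',v) < d(v',w)`. -/
theorem stmt_9 {V : Type*} [Fintype V] (G : SimpleGraph V)
    (hconn : G.Connected) (hbip : G.Colorable 2)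
    (p : ℕ) (X : Fin p → Set V) (hX : IsConvexPartition G X)
    (F : Set (Sym2 V)) (φ : V → Fin p) (hskel : IsSkeleton G X F φ) :
    ∀ j : Fin p, ∀ v' w' : V, G.Adj v' w' → w' ∈ X j → v' ∉ X j →
      ∃ v w : V, s(v, w) ∈ F ∧ φ w = j ∧ G.edist v' v < G.edist v' w := by
  intro j v' w' hadj hw' hv'
  obtain ⟨hne', hdisj, hcover, hconv⟩ := hX
  obtain ⟨hF, hcross, huniq, hφ⟩ := hskel
  -- v' lies in some part i
  have : v' ∈ ⋃ k, X k := hcover ▸ Set.mem_univ v'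
  obtain ⟨i, hi⟩ := Set.mem_iUnion.mp this
  have hij : i ≠ j := fun h => hv' (h ▸ hi)
  obtain ⟨e, ⟨heF, a, b, heq, haXi, hbXj⟩, -⟩ :=
    huniq i j hij ⟨v', w', hadj, hi, hw'⟩
  subst heq
  have hab : G.Adj a b := hF heF
  have hbV : b ∈ endVerts F := ⟨s(a, b), heF, by simp⟩
  have hφb : φ b = j := (hφ b hbV j).mpr hbXj
  refine ⟨a, b, heF, hφb, ?_⟩
  -- distances
  obtain ⟨C⟩ := hbip
  have hda : G.dist v' a ≠ G.dist v' b := by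
    intro h
    obtain ⟨pa, hpa⟩ := (hconn v' a).exists_walk_length_eq_dist
    obtain ⟨pb, hpb⟩ := (hconn v' b).exists_walk_length_eq_dist
    have h1 := walk_parity C pa
    have h2 := walk_parity C pb
    rw [hpa] at h1; rw [hpb] at h2
    have key : (C v' = C a) ↔ (C v' = C b) := by rw [← h1, ← h2, h]
    exact C.valid hab (fin2_iff _ _ _ key)
  have htri1 : G.dist v' b ≤ G.dist v' a + 1 := by
    have := hconn.dist_triangle (u := v') (v := a) (w := b)
    rwa [SimpleGraph.dist_eq_one_iff_adj.mpr hab] at this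
  have htri2 : G.dist v' a ≤ G.dist v' b + 1 := by
    have := hconn.dist_triangle (u := v') (v := b) (w := a)
    rwa [SimpleGraph.dist_eq_one_iff_adj.mpr hab.symm] at this
  rcases lt_or_gt_of_ne hda with hlt | hgt
  · rw [← coe_dist (hconn v' a), ← coe_dist (hconn v' b)]
    exact_mod_cast hlt
  · -- then dist v' a = dist v' b + 1, so b is on a shortest v'-a path; convexity gives b ∈ X i
    exfalso
    have heqd : G.dist v' b + G.dist b a = G.dist v' a := by
      rw [SimpleGraph.dist_eq_one_iff_adj.mpr hab.symm]; omega
    have hedist : G.edist v' b + G.edist b a = G.edist v' a := by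
      rw [← coe_dist (hconn v' b), ← coe_dist (hconn b a), ← coe_dist (hconn v' a)]
      exact_mod_cast heqd
    have hbXi : b ∈ X i := hconv i v' hi a haXi b hedist
    exact Set.disjoint_left.mp (hdisj i j hij) hbXi hbXj
end

section
/- Let G be a connected bipartite simple graph, let 𝒳 = {X₁,…,X_p} be a convex p-partition of G, and let (F,φ) be an 𝒳-skeleton. Then for every i ∈ {1,…,p} and every u ∈ X_i, i ∈ L'(u); that is, there do not exist w ∈ V(F) with φ(w) = i and a vertex v with d_G(u,v) + d_G(v,w) = d_G(u,w) such that i ∉ L(v). -/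
lemma mem_Lset {V : Type*} (G : SimpleGraph V)
    (p : ℕ) (X : Fin p → Set V) (hX : IsConvexPartition G X)
    (F : Set (Sym2 V)) (φ : V → Fin p) (hskel : IsSkeleton G X F φ)
    (i : Fin p) (u : V) (hu : u ∈ X i) : i ∈ Lset G F φ u := by
  rintro ⟨v, w, hvw, hφw, hlt⟩
  obtain ⟨hF, hnot, -, hφ⟩ := hskel
  have hw : w ∈ endVerts F := ⟨s(v, w), hvw, by simp⟩
  have hwX : w ∈ X i := ((hφ w hw i).1 hφw)
  have hadj : G.Adj v w := hF hvw
  have h1 : G.edist v w = 1 := SimpleGraph.edist_eq_one_iff_adj.mpr hadj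
  have hle : G.edist u w ≤ G.edist u v + 1 := by
    calc G.edist u w ≤ G.edist u v + G.edist v w := G.edist_triangle
    _ = G.edist u v + 1 := by rw [h1]
  have hge : G.edist u v + 1 ≤ G.edist u w := Order.add_one_le_of_lt hlt
  have heq : G.edist u v + G.edist v w = G.edist u w := by
    rw [h1]; exact le_antisymm hge hle
  have hvX : v ∈ X i := hX.2.2.2 i u hu w hwX v heq
  exact hnot v w hvw i ⟨hvX, hwX⟩

/-- If `(F, φ)` is a skeleton of a convex `p`-partition of a connected bipartite
graph, then `i ∈ L'(u)` for every `u ∈ X i`. -/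
theorem stmt_10 {V : Type*} [Fintype V] (G : SimpleGraph V)
    (hconn : G.Connected) (hbip : G.Colorable 2)
    (p : ℕ) (X : Fin p → Set V) (hX : IsConvexPartition G X)
    (F : Set (Sym2 V)) (φ : V → Fin p) (hskel : IsSkeleton G X F φ) :
    ∀ i : Fin p, ∀ u ∈ X i, i ∈ L'set G F φ u := by
  intro i u hu
  constructor
  · exact mem_Lset G p X hX F φ hskel i u hu
  · rintro ⟨w, hw, hφw, v, heq, hvL⟩
    have hwX : w ∈ X i := (hskel.2.2.2 w hw i).1 hφw
    have hvX : v ∈ X i := hX.2.2.2 i u hu w hwX v heq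
    exact hvL (mem_Lset G p X hX F φ hskel i v hvX)
end

section
/- Let G be a connected bipartite simple graph, let 𝒳 = {X₁,…,X_p} be a convex p-partition of G, and let (F,φ) be an 𝒳-skeleton. Then for every i ∈ {1,…,p} and every u ∈ X_i, L'(u) = {i}. In particular, for every j ∈ {1,…,p} with j ≠ i, there exist a vertex w ∈ V(F) with φ(w) = j and a vertex v ∈ I[u,w] with j ∉ L(v). -/
namespace Stmt11Aux

open SimpleGraph

variable {V : Type*} {G : SimpleGraph V}

lemma edist_cast (hconn : G.Connected) (u v : V) : G.edist u v = (G.dist u v : ℕ∞) :=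
  (ENat.coe_toNat (SimpleGraph.edist_ne_top_iff_reachable.mpr (hconn u v))).symm

lemma coloring_walk_parity (C : G.Coloring (Fin 2)) {x y : V} (p : G.Walk x y) :
    C x = C y ↔ Even p.length := by
  induction p with
  | nil => simp
  | @cons a b c h q ih =>
    have hab : C a ≠ C b := C.valid h
    rw [Walk.length_cons, Nat.even_add_one, ← ih]
    revert hab
    generalize C a = s; generalize C b = t; generalize C c = r
    revert s t r; decide

lemma dist_parity (hconn : G.Connected) (hbip : G.Colorable 2) {v w : V}
    (h : G.Adj v w) (u : V) : G.dist u v ≠ G.dist u w := by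
  obtain ⟨C⟩ := hbip
  obtain ⟨p, hp⟩ := hconn.exists_walk_length_eq_dist u v
  obtain ⟨q, hq⟩ := hconn.exists_walk_length_eq_dist u w
  intro heq
  have h1 := coloring_walk_parity C p
  have h2 := coloring_walk_parity C q
  rw [hp] at h1; rw [hq] at h2
  rw [heq] at h1
  have hvw : C v ≠ C w := C.valid h
  have : C u = C v ↔ C u = C w := h1.trans h2.symm
  revert hvw this
  generalize C u = s; generalize C v = t; generalize C w = r
  revert s t r; decide

lemma side_lemma (hconn : G.Connected) (hbip : G.Colorable 2) {C : Set V}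
    (hC : GraphConvex G C) {c d : V} (hcd : G.Adj c d) (hcC : c ∈ C) (hdC : d ∉ C)
    {v : V} (hv : v ∈ C) : G.edist v c < G.edist v d := by
  rw [edist_cast hconn, edist_cast hconn]
  have hne := dist_parity hconn hbip hcd v
  have htri : G.dist v c ≤ G.dist v d + G.dist d c := hconn.dist_triangle
  have hdc : G.dist d c = 1 := SimpleGraph.dist_eq_one_iff_adj.mpr hcd.symm
  by_contra hle
  have hlt : G.dist v d < G.dist v c := by
    rw [not_lt, Nat.cast_le] at hle
    omega
  have heq : G.dist v c = G.dist v d + G.dist d c := by omega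
  have : d ∈ C := by
    apply hC v hv c hcC d
    rw [edist_cast hconn, edist_cast hconn, edist_cast hconn, ← Nat.cast_add,
      Nat.cast_inj]
    exact heq.symm
  exact hdC this

lemma boundary (hconn : G.Connected) (S : Set V) {w : V} (hwS : w ∈ S) :
    ∀ n u, G.dist u w = n → u ∉ S →
      ∃ v z, v ∉ S ∧ z ∈ S ∧ G.Adj v z ∧ G.dist u v + G.dist v w = G.dist u w := by
  intro n
  induction n using Nat.strong_induction_on with
  | _ n IH =>
    intro u hn huS
    obtain ⟨p, hp⟩ := hconn.exists_walk_length_eq_dist u w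
    cases p with
    | nil => exact absurd hwS huS
    | @cons _ y _ h q =>
      rw [Walk.length_cons] at hp
      have hyw : G.dist y w ≤ q.length := SimpleGraph.dist_le q
      have huy : G.dist u y = 1 := SimpleGraph.dist_eq_one_iff_adj.mpr h
      have htri : G.dist u w ≤ G.dist u y + G.dist y w := hconn.dist_triangle
      have hywe : G.dist y w + 1 = G.dist u w := by omega
      by_cases hy : y ∈ S
      · exact ⟨u, y, huS, hy, h, by simp⟩
      · obtain ⟨v, z, hvS, hzS, hadj, hsum⟩ :=
          IH (G.dist y w) (by omega) y rfl hy
        refine ⟨v, z, hvS, hzS, hadj, ?_⟩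
        have t1 : G.dist u w ≤ G.dist u v + G.dist v w := hconn.dist_triangle
        have t2 : G.dist u v ≤ G.dist u y + G.dist y v := hconn.dist_triangle
        omega

lemma mem_Lset (hconn : G.Connected) (hbip : G.Colorable 2)
    {p : ℕ} {X : Fin p → Set V} (hX : IsConvexPartition G X)
    {F : Set (Sym2 V)} {φ : V → Fin p} (hskel : IsSkeleton G X F φ)
    {i : Fin p} {u : V} (hu : u ∈ X i) : i ∈ Lset G F φ u := by
  rintro ⟨v, w, hvwF, hφw, hlt⟩
  have hwend : w ∈ endVerts F := ⟨s(v, w), hvwF, by simp⟩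
  have hw : w ∈ X i := (hskel.2.2.2 w hwend i).mp hφw
  have hadj : G.Adj v w := hskel.1 hvwF
  rw [edist_cast hconn, edist_cast hconn, Nat.cast_lt] at hlt
  have htri : G.dist u w ≤ G.dist u v + G.dist v w := hconn.dist_triangle
  have hvw1 : G.dist v w = 1 := SimpleGraph.dist_eq_one_iff_adj.mpr hadj
  have heq : G.dist u v + G.dist v w = G.dist u w := by omega
  have hvXi : v ∈ X i := by
    apply hX.2.2.2 i u hu w hw v
    rw [edist_cast hconn, edist_cast hconn, edist_cast hconn, ← Nat.cast_add,
      Nat.cast_inj]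
    exact heq
  exact hskel.2.1 v w hvwF i ⟨hvXi, hw⟩

lemma claim3 (hconn : G.Connected) (hbip : G.Colorable 2)
    {p : ℕ} {X : Fin p → Set V} (hX : IsConvexPartition G X)
    {F : Set (Sym2 V)} {φ : V → Fin p} (hskel : IsSkeleton G X F φ)
    {i j : Fin p} {u : V} (hu : u ∈ X i) (hne : j ≠ i) :
    ∃ w ∈ endVerts F, φ w = j ∧
      ∃ v : V, G.edist u v + G.edist v w = G.edist u w ∧ j ∉ Lset G F φ v := by
  classical
  -- u is not in X j
  have huj : u ∉ X j := fun h =>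
    Set.disjoint_left.mp (hX.2.1 j i hne) h hu
  -- a part index for any vertex
  have part : ∀ x : V, ∃ m, x ∈ X m := by
    intro x
    have : x ∈ ⋃ m, X m := hX.2.2.1 ▸ Set.mem_univ x
    exact Set.mem_iUnion.mp this
  -- from any boundary pair, produce the F-edge between the two parts
  have getF : ∀ v z : V, v ∉ X j → z ∈ X j → G.Adj v z →
      ∃ c d : V, s(c, d) ∈ F ∧ d ∈ X j ∧ G.edist v c < G.edist v d ∧ φ d = j := by
    intro v z hvj hzj hadj
    obtain ⟨m, hvm⟩ := part v
    have hmj : m ≠ j := fun h => hvj (h ▸ hvm)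
    obtain ⟨e, ⟨heF, c, d, rfl, hc, hd⟩, -⟩ :=
      hskel.2.2.1 m j hmj ⟨v, z, hadj, hvm, hzj⟩
    have hdend : d ∈ endVerts F := ⟨s(c, d), heF, by simp⟩
    have hφd : φ d = j := (hskel.2.2.2 d hdend j).mpr hd
    have hdm : d ∉ X m := fun h =>
      Set.disjoint_left.mp (hX.2.1 m j hmj) h hd
    have hcd : G.Adj c d := hskel.1 heF
    exact ⟨c, d, heF, hd, side_lemma hconn hbip (hX.2.2.2 m) hcd hc hdm hvm, hφd⟩
  -- first, get some F-edge endpoint in X j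
  obtain ⟨y0, hy0⟩ := hX.1 j
  obtain ⟨v0, z0, hv0, hz0, hadj0, -⟩ := boundary hconn (X j) hy0 _ u rfl huj
  obtain ⟨c0, d0, hF0, hd0, -, hφd0⟩ := getF v0 z0 hv0 hz0 hadj0
  -- now pick w := d0 ∈ V(F) ∩ X j and walk a geodesic from u to it
  obtain ⟨v, z, hvj, hzj, hadj, hsum⟩ := boundary hconn (X j) hd0 _ u rfl huj
  obtain ⟨c, d, hF, hd, hside, hφd⟩ := getF v z hvj hzj hadj
  refine ⟨d0, ⟨s(c0, d0), hF0, by simp⟩, hφd0, v, ?_, ?_⟩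
  · rw [edist_cast hconn, edist_cast hconn, edist_cast hconn, ← Nat.cast_add,
      Nat.cast_inj]
    exact hsum
  · intro hL
    exact hL ⟨c, d, hF, hφd, hside⟩


end Stmt11Aux

open Stmt11Aux in
/-- If `(F, φ)` is a skeleton of a convex `p`-partition of a connected bipartite
graph, then `L'(u) = {i}` for every `u ∈ X i`; in particular, for every `j ≠ i`
there are `w ∈ V(F)` with `φ(w) = j` and `v ∈ I[u,w]` with `j ∉ L(v)`. -/
theorem stmt_11 {V : Type*} [Fintype V] (G : SimpleGraph V)
    (hconn : G.Connected) (hbip : G.Colorable 2)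
    (p : ℕ) (X : Fin p → Set V) (hX : IsConvexPartition G X)
    (F : Set (Sym2 V)) (φ : V → Fin p) (hskel : IsSkeleton G X F φ) :
    ∀ i : Fin p, ∀ u ∈ X i,
      L'set G F φ u = {i} ∧
      ∀ j : Fin p, j ≠ i → ∃ w ∈ endVerts F, φ w = j ∧
        ∃ v : V, G.edist u v + G.edist v w = G.edist u w ∧ j ∉ Lset G F φ v := by
  intro i u hu
  have hc3 : ∀ j : Fin p, j ≠ i → ∃ w ∈ endVerts F, φ w = j ∧
      ∃ v : V, G.edist u v + G.edist v w = G.edist u w ∧ j ∉ Lset G F φ v :=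
    fun j hj => claim3 hconn hbip hX hskel hu hj
  refine ⟨?_, hc3⟩
  ext j
  simp only [Set.mem_singleton_iff]
  constructor
  · rintro ⟨hjL, hjrem⟩
    by_contra hji
    exact hjrem (by
      obtain ⟨w, hwend, hφw, v, hsum, hnL⟩ := hc3 j hji
      exact ⟨w, hwend, hφw, v, hsum, hnL⟩)
  · rintro rfl
    refine ⟨mem_Lset hconn hbip hX hskel hu, ?_⟩
    rintro ⟨w, hwend, hφw, v, hsum, hnL⟩
    have hw : w ∈ X j := (hskel.2.2.2 w hwend j).mp hφw
    have hv : v ∈ X j := hX.2.2.2 j u hu w hw v hsum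
    exact hnL (mem_Lset hconn hbip hX hskel hv)
end
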